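/- Theorem 5.3 (tradeoff between payments and accuracy). Fix a mechanism M on n players and privacy loss functions λ_1, …, λ_n that respect indifference and are growing with statistical distance for monotonic neighbors. Suppose M is individually rational; M is truthful for every input (b,v) and player i with v_i = 0; and there is a finite P ≥ 0 such that Pay_i(b,v) ≤ P for every player i and every input (b,v) with v_i = 0. Then for all τ, γ, η > 0 with η + 2γ ≤ 1 (and ηn, γn integers), and every β < 1/2 − (P/τ)·γn, the mechanism M is NOT ([η + γ, γ], β)-accurate on all inputs in which at most an η fraction of the players have valuation exceeding τ; i.e., there exists an input (b,v) with |{i : v_i > τ}| ≤ ηn on which M fails ([η + γ, γ], β)-accuracy. -/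

import Mathlib

open MeasureTheory
open scoped ENNReal

noncomputable section

attribute [local instance] Classical.propDecidable

/-- Expectation of a real-valued function under a `PMF`. -/
def PMF.expect {α : Type*} [MeasurableSpace α] (p : PMF α) (f : α → ℝ) : ℝ :=
  ∫ x, f x ∂p.toMeasure

/-- Total variation (statistical) distance between two distributions:
`Δ(p,q) = sup_S |p(S) - q(S)|`. -/
def tvDist {α : Type*} (p q : PMF α) : ℝ :=
  ⨆ S : Set α, |(p.toOuterMeasure S).toReal - (q.toOuterMeasure S).toReal|

/-- A mechanism on `n` players: a randomized function producing an integer output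
(an estimate of the sum of the data bits) together with payments to the `n` players. -/
structure Mech (n : ℕ) where
  run : (Fin n → Bool) → (Fin n → ℝ) → PMF (ℤ × (Fin n → ℝ))

namespace Mech

variable {n : ℕ}

/-- The output part `M_out`. -/
def out (M : Mech n) (b : Fin n → Bool) (v : Fin n → ℝ) : PMF ℤ :=
  (M.run b v).map Prod.fst

/-- The payment part `M_pay`. -/
def payPMF (M : Mech n) (b : Fin n → Bool) (v : Fin n → ℝ) : PMF (Fin n → ℝ) :=
  (M.run b v).map Prod.snd

/-- `Pay_i(b,v)`: the expected payment to player `i`. -/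
def pay (M : Mech n) (b : Fin n → Bool) (v : Fin n → ℝ) (i : Fin n) : ℝ :=
  (M.payPMF b v).expect (fun p => p i)

/-- `M_{-i}`: the output together with the payments to all players other than `i`. -/
def minus (M : Mech n) (i : Fin n) (b : Fin n → Bool) (v : Fin n → ℝ) :
    PMF (ℤ × ({j : Fin n // j ≠ i} → ℝ)) :=
  (M.run b v).map (fun sp => (sp.1, fun j => sp.2 j.1))

end Mech

/-- The type of privacy loss functions `λ_i(b, v, v'_i, s, p_{-i})` for player `i`. -/
abbrev LossFn (n : ℕ) (i : Fin n) : Type :=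
  (Fin n → Bool) → (Fin n → ℝ) → ℝ → ℤ → ({j : Fin n // j ≠ i} → ℝ) → ℝ

/-- `Loss_i(b, v, v'_i)`: the expected privacy loss of player `i` with true types `(b,v)`
and declaration `v'_i`. -/
def lossOf {n : ℕ} (M : Mech n) {i : Fin n} (lam : LossFn n i)
    (b : Fin n → Bool) (v : Fin n → ℝ) (v'i : ℝ) : ℝ :=
  (M.run b (Function.update v i v'i)).expect
    (fun sp => lam b v v'i sp.1 (fun j => sp.2 j.1))

/-- `i`-neighbors: inputs agreeing in all coordinates `j ≠ i`. -/
def iNeighbor {n : ℕ} (i : Fin n) (x y : (Fin n → Bool) × (Fin n → ℝ)) : Prop :=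
  ∀ j, j ≠ i → x.1 j = y.1 j ∧ x.2 j = y.2 j

/-- Neighbors: `i`-neighbors for some `i`. -/
def Neighbor {n : ℕ} (x y : (Fin n → Bool) × (Fin n → ℝ)) : Prop :=
  ∃ i, iNeighbor i x y

/-- Monotonically related player types. -/
def monRelated (t t' : Bool × ℝ) : Prop :=
  (t.1 = false ∧ t'.1 = true ∧ t.2 ≤ t'.2) ∨ (t.1 = true ∧ t'.1 = false ∧ t'.2 ≤ t.2)

/-- Monotonic `i`-neighbors. -/
def monINeighbor {n : ℕ} (i : Fin n) (x y : (Fin n → Bool) × (Fin n → ℝ)) : Prop :=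
  iNeighbor i x y ∧ monRelated (x.1 i, x.2 i) (y.1 i, y.2 i)

/-- `(b,v)` is `δ`-distinguishable for player `i` with respect to `f`. -/
def distinguishable {n : ℕ} {α : Type*} (δ : ℝ)
    (f : (Fin n → Bool) → (Fin n → ℝ) → PMF α) (i : Fin n)
    (b : Fin n → Bool) (v : Fin n → ℝ) : Prop :=
  ∃ y : (Fin n → Bool) × (Fin n → ℝ), iNeighbor i (b, v) y ∧ δ ≤ tvDist (f b v) (f y.1 y.2)

/-- `(b,v)` is `δ`-monotonically distinguishable for player `i` with respect to `f`. -/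
def monDistinguishable {n : ℕ} {α : Type*} (δ : ℝ)
    (f : (Fin n → Bool) → (Fin n → ℝ) → PMF α) (i : Fin n)
    (b : Fin n → Bool) (v : Fin n → ℝ) : Prop :=
  ∃ y : (Fin n → Bool) × (Fin n → ℝ), monINeighbor i (b, v) y ∧ δ ≤ tvDist (f b v) (f y.1 y.2)

/-- `λ_i` respects indifference. -/
def respectsIndifference {n : ℕ} (M : Mech n) {i : Fin n} (lam : LossFn n i) : Prop :=
  ∀ b v, v i = 0 → ∀ v' v'', lossOf M lam b v v' = lossOf M lam b v v''

/-- `λ_i` is increasing for `δ`-distinguishability. -/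
def increasingFor {n : ℕ} (M : Mech n) {i : Fin n} (lam : LossFn n i) (δ : ℝ) : Prop :=
  ∃ T : ℝ → (Fin n → Bool) → ({j : Fin n // j ≠ i} → ℝ) → ℝ,
    ∀ ℓ, 0 < ℓ → ∀ (b : Fin n → Bool) (v : Fin n → ℝ),
      T ℓ b (fun j => v j.1) ≤ v i →
      distinguishable δ M.out i b v →
      ℓ < lossOf M lam b v (v i)

/-- `λ_i` is increasing for `δ`-monotonic distinguishability. -/
def increasingForMon {n : ℕ} (M : Mech n) {i : Fin n} (lam : LossFn n i) (δ : ℝ) : Prop :=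
  ∃ T : ℝ → (Fin n → Bool) → ({j : Fin n // j ≠ i} → ℝ) → ℝ,
    ∀ ℓ, 0 < ℓ → ∀ (b : Fin n → Bool) (v : Fin n → ℝ),
      T ℓ b (fun j => v j.1) ≤ v i →
      monDistinguishable δ M.out i b v →
      ℓ < lossOf M lam b v (v i)

/-- `M` is individually rational. -/
def indivRational {n : ℕ} (M : Mech n) (lam : ∀ i : Fin n, LossFn n i) : Prop :=
  ∀ b v i, lossOf M (lam i) b v (v i) ≤ M.pay b v i

/-- `M` is truthful for input `(b,v)` and player `i`. -/
def truthfulAt {n : ℕ} (M : Mech n) {i : Fin n} (lam : LossFn n i)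
    (b : Fin n → Bool) (v : Fin n → ℝ) : Prop :=
  ∀ v'i : ℝ,
    M.pay b (Function.update v i v'i) i - lossOf M lam b v v'i ≤
      M.pay b v i - lossOf M lam b v (v i)

/-- The average `b̄` of the data bits. -/
def bbar {n : ℕ} (b : Fin n → Bool) : ℝ := (∑ i, if b i then (1 : ℝ) else 0) / n

/-- `M` is `([a, a'], β)`-accurate on input `(b,v)`. -/
def accurate {n : ℕ} (M : Mech n) (a a' β : ℝ) (b : Fin n → Bool) (v : Fin n → ℝ) : Prop :=
  ((M.out b v).toOuterMeasure
      {s : ℤ | ¬((bbar b - a) * n < (s : ℝ) ∧ (s : ℝ) < (bbar b + a') * n)}).toReal ≤ β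

/-- `G` is the symmetric geometric distribution `Geom(ε)` on `ℤ`, with
`Pr[X = k] = (1-e^{-ε})/(1+e^{-ε}) · e^{-ε|k|}`. -/
def isGeom (ε : ℝ) (G : PMF ℤ) : Prop :=
  ∀ k : ℤ, G k =
    ENNReal.ofReal ((1 - Real.exp (-ε)) / (1 + Real.exp (-ε)) * Real.exp (-ε * |(k : ℝ)|))

/-- The monotonic-valuations mechanism `M_{B,ε}` (Algorithm 1): data bits of players with
`2εv_i > B/n` are treated as 0, the output is the resulting sum plus `Geom(ε)` noise, and
each player with `2εv_i ≤ B/n` is paid `B/n` (others are paid nothing). -/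
def monMech (n : ℕ) (B ε : ℝ) (G : PMF ℤ) : Mech n where
  run b v := G.map (fun x =>
    ((∑ i, if b i = true ∧ 2 * ε * v i ≤ B / n then (1 : ℤ) else 0) + x,
      fun i => if 2 * ε * v i ≤ B / n then B / n else 0))

/-- The modified mechanism `M'` of Theorem 4.3: identical to `M_{B,ε}` except that all
players with data bit 0 are paid `B/n`, even those with large privacy valuations. -/
def monMech' (n : ℕ) (B ε : ℝ) (G : PMF ℤ) : Mech n where
  run b v := G.map (fun x =>
    ((∑ i, if b i = true ∧ 2 * ε * v i ≤ B / n then (1 : ℤ) else 0) + x,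
      fun i => if 2 * ε * v i ≤ B / n ∨ b i = false then B / n else 0))

/-- The log-ratio of point probabilities of `M_{-i}` between `(b,v)` and the input where
player `i`'s type is replaced by `(b''_i, v''_i)`. -/
def logRatio {n : ℕ} (M : Mech n) (i : Fin n) (b : Fin n → Bool) (v : Fin n → ℝ)
    (b''i : Bool) (v''i : ℝ) (s : ℤ) (p : {j : Fin n // j ≠ i} → ℝ) : ℝ :=
  Real.log ((M.minus i b v (s, p)).toReal /
    (M.minus i (Function.update b i b''i) (Function.update v i v''i) (s, p)).toReal)

/-- `λ_i` is bounded by differential privacy for monotonic valuations. -/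
def boundedByDPMon {n : ℕ} (M : Mech n) {i : Fin n} (lam : LossFn n i) : Prop :=
  ∀ b v v'i s p,
    |lam b v v'i s p| ≤
      v i * ⨆ t : {t : Bool × ℝ // monRelated (b i, v i) t},
        logRatio M i b v t.1.1 t.1.2 s p

/-- `λ_i` respects identical output distributions. -/
def respectsIdentical {n : ℕ} (M : Mech n) {i : Fin n} (lam : LossFn n i) : Prop :=
  ∀ b v v'i, M.minus i b v = M.minus i b (Function.update v i v'i) →
    ∀ s p, lam b v v'i s p = lam b v (v i) s p

/-- `λ_i` is growing with statistical distance for monotonic neighbors. -/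
def growingMon {n : ℕ} (M : Mech n) {i : Fin n} (lam : LossFn n i) : Prop :=
  ∀ b v y, monINeighbor i (b, v) y →
    v i * tvDist (M.out b v) (M.out y.1 y.2) ≤ lossOf M lam b v (v i)


/-!
Truthfulness at valuation `0`, together with indifference, bounds every payment by `P`;
individual rationality and growth with statistical distance then show that turning one bit
from `0` to `1` moves `M_out` by at most `P / v_i` in statistical distance. Turning on, one at
a time, the bits of `h` players with a huge valuation `K` and then of `2g` players with
valuation `τ` moves the output distribution by at most `h P / K + 2g P / τ`. Accuracy on the
first and the last of these inputs puts mass `≥ 1 - β` on the disjoint windows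
`(-(h+g), g)` and `(g, h+3g)` respectively, so the distance is at least `1 - 2β`; for `K`
large this contradicts `β < 1/2 - (P/τ) g`.
-/

theorem Finset.sum_range_add_eq_nsmul_add_nsmul {A : Type*} [AddCommMonoid A] {f : ℕ → A}
    {h l : ℕ} {a b : A} (hlow : ∀ k < h, f k = a) (hhigh : ∀ k, h ≤ k → f k = b) :
    ∑ k ∈ Finset.range (h + l), f k = h • a + l • b := by
  rw [Finset.sum_range_add, Finset.sum_congr rfl fun k hk => hlow k (Finset.mem_range.1 hk),
    Finset.sum_congr rfl fun k _ => hhigh (h + k) (Nat.le_add_right h k)]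
  simp

theorem Fin.card_filter_lt_le {n h : ℕ} {τ : ℝ} {v : Fin n → ℝ}
    (hv : ∀ i : Fin n, h ≤ (i : ℕ) → v i ≤ τ) :
    (Finset.univ.filter fun i : Fin n => τ < v i).card ≤ h :=
  calc _ ≤ (Finset.univ.filter fun i : Fin n => (i : ℕ) < h).card :=
        Finset.card_le_card <| Finset.monotone_filter_right _ fun i _ hi =>
          lt_of_not_ge fun hih => (hv i hih).not_gt hi
    _ ≤ h := Fin.card_filter_val_lt.trans_le (min_le_right _ _)

namespace PMF

variable {α : Type*}

theorem toReal_toOuterMeasure_eq_measureReal [MeasurableSpace α] [DiscreteMeasurableSpace α]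
    (p : PMF α) (s : Set α) : (p.toOuterMeasure s).toReal = p.toMeasure.real s := by
  rw [measureReal_def, p.toMeasure_apply_eq_toOuterMeasure_apply (.of_discrete)]

theorem toReal_toOuterMeasure_le_one (p : PMF α) (s : Set α) :
    (p.toOuterMeasure s).toReal ≤ 1 := by
  let _ : MeasurableSpace α := ⊤
  rw [p.toReal_toOuterMeasure_eq_measureReal]
  exact measureReal_le_one

theorem toReal_toOuterMeasure_compl (p : PMF α) (s : Set α) :
    (p.toOuterMeasure sᶜ).toReal = 1 - (p.toOuterMeasure s).toReal := by
  let _ : MeasurableSpace α := ⊤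
  simp only [p.toReal_toOuterMeasure_eq_measureReal]
  exact probReal_compl_eq_one_sub (.of_discrete)

theorem toReal_toOuterMeasure_mono (p : PMF α) {s t : Set α} (hst : s ⊆ t) :
    (p.toOuterMeasure s).toReal ≤ (p.toOuterMeasure t).toReal := by
  let _ : MeasurableSpace α := ⊤
  simp only [p.toReal_toOuterMeasure_eq_measureReal]
  exact measureReal_mono hst

end PMF

section tvDist

variable {α : Type*}

theorem abs_sub_le_tvDist (p q : PMF α) (s : Set α) :
    |(p.toOuterMeasure s).toReal - (q.toOuterMeasure s).toReal| ≤ tvDist p q := by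
  refine le_ciSup (f := fun t => |(p.toOuterMeasure t).toReal - (q.toOuterMeasure t).toReal|)
    ⟨1, ?_⟩ s
  rintro _ ⟨t, rfl⟩
  have hp := p.toReal_toOuterMeasure_le_one t
  have hq := q.toReal_toOuterMeasure_le_one t
  rw [abs_sub_le_iff]
  constructor <;> linarith [(p.toOuterMeasure t).toReal_nonneg, (q.toOuterMeasure t).toReal_nonneg]

@[simp]
theorem tvDist_self (p : PMF α) : tvDist p p = 0 := by
  simp [tvDist]

theorem tvDist_triangle (p q r : PMF α) : tvDist p r ≤ tvDist p q + tvDist q r :=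
  ciSup_le fun s =>
    (abs_sub_le _ _ _).trans (add_le_add (abs_sub_le_tvDist p q s) (abs_sub_le_tvDist q r s))

theorem tvDist_le_sum_range (f : ℕ → PMF α) (m : ℕ) :
    tvDist (f 0) (f m) ≤ ∑ k ∈ Finset.range m, tvDist (f k) (f (k + 1)) := by
  induction m with
  | zero => simp
  | succ m ih =>
    rw [Finset.sum_range_succ]
    linarith [tvDist_triangle (f 0) (f m) (f (m + 1))]

theorem one_sub_two_mul_le_tvDist {p q : PMF α} {s t : Set α} {β : ℝ} (hst : Disjoint s t)
    (hs : 1 - β ≤ (p.toOuterMeasure s).toReal) (ht : 1 - β ≤ (q.toOuterMeasure t).toReal) :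
    1 - 2 * β ≤ tvDist p q := by
  have hqs : (q.toOuterMeasure s).toReal ≤ β := by
    have := q.toReal_toOuterMeasure_mono hst.subset_compl_right
    rw [q.toReal_toOuterMeasure_compl] at this
    linarith
  calc 1 - 2 * β ≤ (p.toOuterMeasure s).toReal - (q.toOuterMeasure s).toReal := by linarith
    _ ≤ tvDist p q := (le_abs_self _).trans (abs_sub_le_tvDist p q s)

end tvDist

section Mechanisms

variable {n : ℕ} {M : Mech n}

def accuracyWindow (b : Fin n → Bool) (a a' : ℝ) : Set ℤ :=
  {s : ℤ | (bbar b - a) * n < (s : ℝ) ∧ (s : ℝ) < (bbar b + a') * n}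

theorem accurate.one_sub_le_toOuterMeasure {a a' β : ℝ} {b : Fin n → Bool} {v : Fin n → ℝ}
    (hacc : accurate M a a' β b v) :
    1 - β ≤ ((M.out b v).toOuterMeasure (accuracyWindow b a a')).toReal := by
  have := (M.out b v).toReal_toOuterMeasure_compl (accuracyWindow b a a')
  unfold accuracyWindow at this ⊢
  unfold accurate at hacc
  rw [Set.compl_ofPred] at this
  linarith

theorem pay_le_pay_update_zero {i : Fin n} {lam : LossFn n i} (hindiff : respectsIndifference M lam)
    {b : Fin n → Bool} {v : Fin n → ℝ} (htruth : truthfulAt M lam b (Function.update v i 0)) :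
    M.pay b v i ≤ M.pay b (Function.update v i 0) i := by
  have hdev := htruth (v i)
  rw [Function.update_idem, Function.update_eq_self,
    hindiff b _ (Function.update_self i 0 v) (v i) (Function.update v i 0 i)] at hdev
  linarith

theorem tvDist_out_le_div {lam : ∀ i : Fin n, LossFn n i} {i : Fin n}
    (hgrow : growingMon M (lam i)) (hIR : indivRational M lam) {P : ℝ}
    {b : Fin n → Bool} {v : Fin n → ℝ} {y : (Fin n → Bool) × (Fin n → ℝ)}
    (hpay : M.pay b v i ≤ P) (hvi : 0 < v i) (hy : monINeighbor i (b, v) y) :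
    tvDist (M.out b v) (M.out y.1 y.2) ≤ P / v i := by
  rw [le_div_iff₀' hvi]
  exact (hgrow b v y hy).trans ((hIR b v i).trans hpay)

def prefixBits (n k : ℕ) : Fin n → Bool := fun i => decide ((i : ℕ) < k)

theorem bbar_prefixBits {k : ℕ} (hk : k ≤ n) : bbar (prefixBits n k) = k / n := by
  simp only [bbar, prefixBits, decide_eq_true_eq]
  rw [Finset.sum_boole, Fin.card_filter_val_lt, min_eq_right hk]

theorem monINeighbor_prefixBits (i : Fin n) (v : Fin n → ℝ) :
    monINeighbor i (prefixBits n i, v) (prefixBits n (i + 1), v) := by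
  refine ⟨fun j hj => ⟨?_, rfl⟩, Or.inl ⟨?_, ?_, le_rfl⟩⟩
  · have : (j : ℕ) ≠ i := Fin.val_ne_of_ne hj
    simp only [prefixBits, decide_eq_decide]
    omega
  all_goals simp [prefixBits]

theorem disjoint_accuracyWindow_prefixBits {h g : ℕ} (hm : h + 2 * g ≤ n) :
    Disjoint (accuracyWindow (prefixBits n 0) ((h + g) / n) (g / n))
      (accuracyWindow (prefixBits n (h + 2 * g)) ((h + g) / n) (g / n)) := by
  rw [accuracyWindow, accuracyWindow, bbar_prefixBits (Nat.zero_le n), bbar_prefixBits hm,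
    Set.disjoint_left]
  rintro s ⟨-, hs⟩ ⟨hs', -⟩
  have : (((h + 2 * g : ℕ) : ℝ) / n - (h + g) / n) * n = ((0 : ℕ) / n + g / n) * n := by
    push_cast
    ring
  linarith

theorem tvDist_out_prefixBits_le {lam : ∀ i : Fin n, LossFn n i}
    (hgrow : ∀ i, growingMon M (lam i)) (hIR : indivRational M lam) {P : ℝ}
    (hpay : ∀ b v i, M.pay b v i ≤ P) (w : ℕ → ℝ) (hw : ∀ k, 0 < w k) {m : ℕ} (hm : m ≤ n) :
    tvDist (M.out (prefixBits n 0) fun i => w i) (M.out (prefixBits n m) fun i => w i) ≤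
      ∑ k ∈ Finset.range m, P / w k := by
  refine (tvDist_le_sum_range (fun k => M.out (prefixBits n k) fun i => w i) m).trans
    (Finset.sum_le_sum fun k hk => ?_)
  have hkn : k < n := (Finset.mem_range.1 hk).trans_le hm
  exact tvDist_out_le_div (y := (prefixBits n (k + 1), fun i => w i)) (hgrow ⟨k, hkn⟩) hIR
    (hpay _ _ _) (hw k) (monINeighbor_prefixBits ⟨k, hkn⟩ _)

end Mechanisms

/-- Here `η = h / n` and `γ = g / n`. -/
theorem payment_accuracy_tradeoff_general (n : ℕ) (M : Mech n)
    (lam : ∀ i : Fin n, LossFn n i)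
    (hindiff : ∀ i : Fin n, respectsIndifference M (lam i))
    (hgrow : ∀ i : Fin n, growingMon M (lam i))
    (hIR : indivRational M lam)
    (htruth : ∀ (b : Fin n → Bool) (v : Fin n → ℝ) (i : Fin n), v i = 0 →
      truthfulAt M (lam i) b v)
    (P : ℝ)
    (hPmax : ∀ (b : Fin n → Bool) (v : Fin n → ℝ) (i : Fin n), v i = 0 →
      M.pay b v i ≤ P)
    (τ : ℝ) (hτ : 0 < τ) (h g : ℕ)
    (hsum : (h : ℝ) + 2 * g ≤ n)
    (β : ℝ) (hβ : β < 1 / 2 - P / τ * g) :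
    ∃ (b : Fin n → Bool) (v : Fin n → ℝ),
      (Finset.univ.filter (fun i : Fin n => τ < v i)).card ≤ h ∧
      ¬ accurate M (((h : ℝ) + g) / n) ((g : ℝ) / n) β b v := by
  by_contra! hacc
  have hpay (b : Fin n → Bool) (v : Fin n → ℝ) (i : Fin n) : M.pay b v i ≤ P :=
    (pay_le_pay_update_zero (hindiff i) (htruth b _ i (Function.update_self i 0 v))).trans
      (hPmax b _ i (Function.update_self i 0 v))
  obtain ⟨K, hK0, hK⟩ : ∃ K > 0, h * P / K < 1 - 2 * β - 2 * g * (P / τ) := by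
    have hδ : 0 < 1 - 2 * β - 2 * g * (P / τ) := by linarith [mul_comm (P / τ) g]
    exact ((Filter.eventually_gt_atTop 0).and ((tendsto_const_nhds.div_atTop
      Filter.tendsto_id).eventually (gt_mem_nhds hδ))).exists
  set w : ℕ → ℝ := fun k => if k < h then K else τ
  have hw (k : ℕ) : 0 < w k := by positivity
  have hfew : (Finset.univ.filter fun i : Fin n => τ < w i).card ≤ h :=
    Fin.card_filter_lt_le fun i hi => by simp [w, not_lt.2 hi]
  have hm : h + 2 * g ≤ n := by exact_mod_cast hsum
  have hclose := tvDist_out_prefixBits_le hgrow hIR hpay w hw hm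
  rw [Finset.sum_range_add_eq_nsmul_add_nsmul (a := P / K) (b := P / τ)
    (fun k hk => by simp [w, hk]) (fun k hk => by simp [w, not_lt.2 hk])] at hclose
  have hfar := one_sub_two_mul_le_tvDist (disjoint_accuracyWindow_prefixBits hm)
    (hacc (prefixBits n 0) _ hfew).one_sub_le_toOuterMeasure
    (hacc (prefixBits n (h + 2 * g)) _ hfew).one_sub_le_toOuterMeasure
  push_cast [nsmul_eq_mul] at hclose
  linarith [mul_div_assoc (h : ℝ) P K]

/-- **Theorem 5.3 (tradeoff between payments and accuracy).** Here `η = h/n` and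
`γ = g/n` for positive integers `h, g`. -/
theorem payment_accuracy_tradeoff (n : ℕ) (hn : 1 ≤ n) (M : Mech n)
    (lam : ∀ i : Fin n, LossFn n i)
    (hindiff : ∀ i : Fin n, respectsIndifference M (lam i))
    (hgrow : ∀ i : Fin n, growingMon M (lam i))
    (hIR : indivRational M lam)
    (htruth : ∀ (b : Fin n → Bool) (v : Fin n → ℝ) (i : Fin n), v i = 0 →
      truthfulAt M (lam i) b v)
    (P : ℝ) (hP0 : 0 ≤ P)
    (hPmax : ∀ (b : Fin n → Bool) (v : Fin n → ℝ) (i : Fin n), v i = 0 →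
      M.pay b v i ≤ P)
    (τ : ℝ) (hτ : 0 < τ) (h g : ℕ) (hh : 0 < h) (hg : 0 < g)
    (hsum : (h : ℝ) + 2 * g ≤ n)
    (β : ℝ) (hβ : β < 1 / 2 - P / τ * g) :
    ∃ (b : Fin n → Bool) (v : Fin n → ℝ),
      (Finset.univ.filter (fun i : Fin n => τ < v i)).card ≤ h ∧
      ¬ accurate M (((h : ℝ) + g) / n) ((g : ℝ) / n) β b v :=
  payment_accuracy_tradeoff_general n M lam hindiff hgrow hIR htruth P hPmax τ hτ h g hsum β hβ
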